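/- arXiv:1409.8125 — 2 statements merged into one kernel-verified Lean document; each statement's English description precedes it below -/
import Mathlib

section
/- Let M ≥ 5 be prime. For any two distinct index pairs (k,l) ≠ (k',l') with k, k', l, l' ∈ {0,…,M−1}, the modulus of the inner product of the corresponding Gabor frame vectors takes one of exactly two values: |⟨g_{k,l}, g_{k',l'}⟩| ∈ {0, √M}. (Equivalently, after normalizing each vector to unit norm, the correlation modulus lies in {0, 1/√M}.) -/
open scoped BigOperators

/-- The Gabor frame vector `g_{k,l} ∈ ℂ^M`, with
`g_{k,l}(m) = exp(2πi·((m−k)³ + l·m)/M)`. -/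
noncomputable def gabor (M : ℕ) (k l : Fin M) : Fin M → ℂ :=
  fun m => Complex.exp (2 * Real.pi * Complex.I *
    ((((m : ℕ) : ℂ) - ((k : ℕ) : ℂ)) ^ 3 + ((l : ℕ) : ℂ) * ((m : ℕ) : ℂ)) / (M : ℂ))

/-- The inner product `⟨u,v⟩ = ∑_{m} u(m)·conj(v(m))` on `ℂ^M`. -/
noncomputable def gip (M : ℕ) (u v : Fin M → ℂ) : ℂ :=
  ∑ m : Fin M, u m * (starRingEnd ℂ) (v m)

/-!
With `ψ` the standard additive character of `ZMod M`, the inner product is the character sum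
`∑ₓ ψ((x - k)³ - (x - k')³ + (l - l')x)`. If `k = k'` the phase is linear and nonconstant, so
the sum vanishes. Otherwise the cubic terms cancel and, as `3 ≠ 0`, the phase is a genuine
quadratic `q x = a x² + b x + c` with `a = 3(k' - k)`. Substituting `x = y + d` in
`|S|² = ∑ₓ ∑_y ψ(q x - q y)` leaves the inner sum `∑_y ψ(2a·d·y)`, which vanishes unless
`d = 0` because `2 ≠ 0`; hence `|S|² = M`.
-/

open Finset

namespace AddChar

theorem sq_norm_sum_eq_sum_sum_sub {G R : Type*} [AddCommGroup G] [Finite G] [AddCommGroup R]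
    [Fintype R] (ψ : AddChar G ℂ) (f : R → G) :
    (‖∑ x, ψ (f x)‖ ^ 2 : ℂ) = ∑ d, ∑ y, ψ (f (y + d) - f y) := by
  rw [← Complex.mul_conj', map_sum, sum_mul_sum, sum_comm]
  conv_rhs => rw [sum_comm]
  refine Fintype.sum_congr _ _ fun y => Fintype.sum_equiv (Equiv.addLeft y).symm _ _ fun x => ?_
  rw [Equiv.addLeft_symm_apply, add_neg_cancel_left, ← map_neg_eq_conj, ← map_add_eq_mul,
    sub_eq_add_neg]

variable {F : Type*} [Field F] [Fintype F] {ψ : AddChar F ℂ}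

theorem norm_sum_quadratic_eq_sqrt_card (hψ : ψ.IsPrimitive) (h2 : (2 : F) ≠ 0) {a : F}
    (ha : a ≠ 0) (b c : F) : ‖∑ x, ψ (a * x ^ 2 + b * x + c)‖ = √(Fintype.card F) := by
  classical
  rw [eq_comm, Real.sqrt_eq_iff_eq_sq (by positivity) (norm_nonneg _), ← Complex.ofReal_inj]
  push_cast
  rw [sq_norm_sum_eq_sum_sum_sub]
  have difference (d y : F) : a * (y + d) ^ 2 + b * (y + d) + c - (a * y ^ 2 + b * y + c)
      = (a * d ^ 2 + b * d) + y * (2 * a * d) := by ring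
  simp_rw [difference, map_add_eq_mul, ← mul_sum, sum_mulShift _ hψ]
  rw [Fintype.sum_eq_single 0 fun d hd => by simp [h2, ha, hd]]
  simp

theorem norm_sum_shifted_cubic_sub_mem (hψ : ψ.IsPrimitive) (h2 : (2 : F) ≠ 0)
    (h3 : (3 : F) ≠ 0) {k k' l l' : F} (h : (k, l) ≠ (k', l')) :
    ‖∑ x, ψ ((x - k) ^ 3 + l * x - ((x - k') ^ 3 + l' * x))‖ ∈
      ({0, √(Fintype.card F)} : Set ℝ) := by
  classical
  obtain hk | hk := eq_or_ne k k'
  · have hl : l - l' ≠ 0 := sub_ne_zero.2 fun hl => h (by rw [hk, hl])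
    have linear (x : F) : (x - k) ^ 3 + l * x - ((x - k') ^ 3 + l' * x) = x * (l - l') := by
      rw [hk]; ring
    left
    simp_rw [linear, sum_mulShift _ hψ, if_neg hl, Nat.cast_zero, norm_zero]
  · right
    have ha : 3 * (k' - k) ≠ 0 := mul_ne_zero h3 (sub_ne_zero.2 hk.symm)
    rw [← norm_sum_quadratic_eq_sqrt_card hψ h2 ha (3 * (k ^ 2 - k' ^ 2) + (l - l'))
      (k' ^ 3 - k ^ 3)]
    congr! 3 with x
    ring

end AddChar

theorem ZMod.finEquiv_apply {n : ℕ} [NeZero n] (i : Fin n) : ZMod.finEquiv n i = (i : ℕ) := by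
  obtain _ | n := n
  · exact absurd rfl (NeZero.ne 0)
  · exact (Fin.cast_val_eq_self i).symm

theorem gabor_eq_stdAddChar {M : ℕ} [NeZero M] (k l m : Fin M) :
    gabor M k l m =
      ZMod.stdAddChar ((((m : ℕ) - (k : ℕ)) ^ 3 + (l : ℕ) * (m : ℕ) : ℤ) : ZMod M) := by
  rw [ZMod.stdAddChar_coe, gabor]
  push_cast
  ring_nf

theorem gip_gabor_eq_sum_stdAddChar {M : ℕ} [NeZero M] (k k' l l' : Fin M) :
    gip M (gabor M k l) (gabor M k' l') = ∑ x : ZMod M, ZMod.stdAddChar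
      ((x - ((k : ℕ) : ZMod M)) ^ 3 + ((l : ℕ) : ZMod M) * x -
        ((x - ((k' : ℕ) : ZMod M)) ^ 3 + ((l' : ℕ) : ZMod M) * x)) := by
  rw [gip, ← (ZMod.finEquiv M).toEquiv.sum_comp]
  refine Fintype.sum_congr _ _ fun m => ?_
  rw [gabor_eq_stdAddChar, gabor_eq_stdAddChar, ← AddChar.map_neg_eq_conj,
    ← AddChar.map_add_eq_mul]
  simp only [RingEquiv.toEquiv_eq_coe, EquivLike.coe_coe, ZMod.finEquiv_apply]
  push_cast
  ring_nf

/-- For a prime `M ≥ 5` and distinct index pairs `(k,l) ≠ (k',l')`, the modulus of the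
inner product of the corresponding Gabor vectors is either `0` or `√M`. -/
theorem gabor_two_valued_correlation (M : ℕ) (hM : Nat.Prime M) (hM5 : 5 ≤ M)
    (k k' l l' : Fin M) (h : (k, l) ≠ (k', l')) :
    ‖gip M (gabor M k l) (gabor M k' l')‖ ∈
      ({0, Real.sqrt M} : Set ℝ) := by
  have : Fact M.Prime := ⟨hM⟩
  have cast_ne_zero {n : ℕ} (hn : 0 < n) (hnM : n < M) : (n : ZMod M) ≠ 0 := by
    rw [Ne, ZMod.natCast_eq_zero_iff]
    exact Nat.not_dvd_of_pos_of_lt hn hnM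
  have cast_injective : Function.Injective fun i : Fin M => ((i : ℕ) : ZMod M) := by
    simpa only [← ZMod.finEquiv_apply] using (ZMod.finEquiv M).injective
  have key := AddChar.norm_sum_shifted_cubic_sub_mem (ZMod.isPrimitive_stdAddChar M)
    (by exact_mod_cast cast_ne_zero two_pos (by omega))
    (by exact_mod_cast cast_ne_zero three_pos (by omega))
    (k := k) (k' := k') (l := l) (l' := l')
    (by simpa only [Ne, Prod.mk.injEq, cast_injective.eq_iff] using h)
  rwa [ZMod.card, ← gip_gabor_eq_sum_stdAddChar] at key
end

section
/- Let M ≥ 5 be prime, let ñ ≥ 1 be such that (ñ − 1) < √M (e.g. any ñ ≤ √M), let k_1,…,k_ñ ∈ {0,…,M−1} be pairwise distinct, and let l_1,…,l_ñ ∈ {0,…,M−1} be arbitrary. Then the vectors g_{k_1,l_1},…,g_{k_ñ,l_ñ} are linearly independent in ℂ^M. -/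
open scoped BigOperators

/-!
For distinct shifts `k ≠ k'`, the phase `(m - k)³ - (m - k')³ + (l - l') m` of
`g_{k,l}(m) · conj g_{k',l'}(m)` is quadratic in `m` with leading coefficient `3 (k' - k) ≠ 0`,
so `⟨g_{k,l}, g_{k',l'}⟩` is a unimodular factor times a quadratic Gauss sum over `ZMod M`, of
modulus exactly `√M`. The Gram matrix of `n` such vectors therefore has diagonal entries `M` and
off-diagonal row sums `(n - 1) √M < M`: it is strictly diagonally dominant, hence invertible,
and the vectors are linearly independent.
-/

open Finset

theorem linearIndependent_of_sum_norm_lt_diag {𝕜 ι V : Type*} [NormedField 𝕜] [Fintype ι]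
    [DecidableEq ι] [AddCommGroup V] [Module 𝕜 V] (v : ι → V) (f : ι → Module.Dual 𝕜 V)
    (hdom : ∀ i, ∑ j ∈ univ.erase i, ‖f i (v j)‖ < ‖f i (v i)‖) :
    LinearIndependent 𝕜 v := by
  rw [Fintype.linearIndependent_iff]
  intro c hc
  refine congrFun (Matrix.eq_zero_of_mulVec_eq_zero
    (det_ne_zero_of_sum_row_lt_diag (A := Matrix.of fun i j => f i (v j)) hdom) ?_)
  ext i
  simpa [Matrix.mulVec, dotProduct, mul_comm] using congrArg (f i) hc

theorem norm_sum_addChar_quadratic {F : Type*} [Field F] [Fintype F] [DecidableEq F]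
    {ψ : AddChar F ℂ} (hψ : ψ.IsPrimitive) (h2 : (2 : F) ≠ 0) {a : F} (ha : a ≠ 0) (b : F) :
    ‖∑ x, ψ (a * x ^ 2 + b * x)‖ = √(Fintype.card F) := by
  set q : F → F := fun x => a * x ^ 2 + b * x
  -- `q (y + d) - q y = q d + y * (2 * a * d)`, and summing over `y` kills every `d ≠ 0`.
  have hsq : (∑ x, ψ (q x)) * (starRingEnd ℂ) (∑ x, ψ (q x)) = Fintype.card F :=
    calc (∑ x, ψ (q x)) * (starRingEnd ℂ) (∑ x, ψ (q x))
        = ∑ y, ∑ d, ψ (q d) * ψ (y * (2 * a * d)) := by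
          rw [map_sum, sum_mul_sum, sum_comm]
          refine sum_congr rfl fun y _ => ?_
          rw [← Equiv.sum_comp (Equiv.addLeft y)]
          refine sum_congr rfl fun d _ => ?_
          rw [← AddChar.map_neg_eq_conj, ← AddChar.map_add_eq_mul, ← AddChar.map_add_eq_mul]
          congr 1
          simp only [q, Equiv.coe_addLeft]
          ring
      _ = ∑ d, ψ (q d) * ∑ y, ψ (y * (2 * a * d)) := by
          rw [sum_comm]
          simp only [mul_sum]
      _ = Fintype.card F := by
          simp [AddChar.sum_mulShift _ hψ, h2, ha, q]
  have hnorm : ‖∑ x, ψ (q x)‖ ^ 2 = Fintype.card F := by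
    exact_mod_cast (Complex.mul_conj' _).symm.trans hsq
  rw [← hnorm, Real.sqrt_sq (norm_nonneg _)]

section

variable {M : ℕ}

theorem dotProductEquiv_star_apply_eq_gip (u w : Fin M → ℂ) :
    dotProductEquiv ℂ (Fin M) (star w) u = gip M u w := by
  simp [gip, dotProduct, mul_comm]

variable [NeZero M]

theorem ZMod.sum_fin_natCast {β : Type*} [AddCommMonoid β] (f : ZMod M → β) :
    ∑ m : Fin M, f (m : ℕ) = ∑ x, f x := by
  obtain ⟨n, rfl⟩ := Nat.exists_eq_succ_of_ne_zero (NeZero.ne M)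
  exact sum_congr rfl fun m _ => congrArg f (Fin.cast_val_eq_self m)

theorem gabor_apply (k l m : Fin M) :
    gabor M k l m = ZMod.stdAddChar ((((m : ℕ) : ZMod M) - ((k : ℕ) : ZMod M)) ^ 3 +
      ((l : ℕ) : ZMod M) * ((m : ℕ) : ZMod M)) := by
  have h := ZMod.stdAddChar_coe (N := M) (((m : ℤ) - (k : ℤ)) ^ 3 + (l : ℤ) * (m : ℤ))
  push_cast at h
  rw [h, gabor]

theorem gip_gabor_self (k l : Fin M) : gip M (gabor M k l) (gabor M k l) = M := by
  simp [gip, Complex.mul_conj', gabor_apply]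

theorem norm_gip_gabor_of_ne (hM : M.Prime) (h2 : M ≠ 2) (h3 : M ≠ 3) {k k' : Fin M}
    (hk : k ≠ k') (l l' : Fin M) :
    ‖gip M (gabor M k l) (gabor M k' l')‖ = √M := by
  have := Fact.mk hM
  set K : ZMod M := ((k : ℕ) : ZMod M)
  set K' : ZMod M := ((k' : ℕ) : ZMod M)
  set L : ZMod M := ((l : ℕ) : ZMod M)
  set L' : ZMod M := ((l' : ℕ) : ZMod M)
  have hgip : gip M (gabor M k l) (gabor M k' l') = ZMod.stdAddChar (K' ^ 3 - K ^ 3) *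
      ∑ x, ZMod.stdAddChar (3 * (K' - K) * x ^ 2 + (3 * (K ^ 2 - K' ^ 2) + L - L') * x) := by
    rw [gip, mul_sum, ← ZMod.sum_fin_natCast]
    refine sum_congr rfl fun m _ => ?_
    rw [gabor_apply, gabor_apply, ← AddChar.map_neg_eq_conj, ← AddChar.map_add_eq_mul,
      ← AddChar.map_add_eq_mul]
    congr 1
    ring
  have hKK : K' - K ≠ 0 := by
    rw [sub_ne_zero, Ne, ZMod.natCast_eq_natCast_iff', Nat.mod_eq_of_lt k.2,
      Nat.mod_eq_of_lt k'.2]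
    exact fun h => hk (Fin.ext h.symm)
  have h3M : (3 : ZMod M) ≠ 0 := by exact_mod_cast ZMod.prime_ne_zero M 3 h3
  rw [hgip, norm_mul, AddChar.norm_apply, one_mul,
    norm_sum_addChar_quadratic (ZMod.isPrimitive_stdAddChar M)
      (by exact_mod_cast ZMod.prime_ne_zero M 2 h2) (mul_ne_zero h3M hKK), ZMod.card]

end

theorem gabor_linearIndependent_of_lt_sqrt_general (M n : ℕ) (hM : Nat.Prime M) (hM5 : 5 ≤ M)
    (hsmall : (n : ℝ) - 1 < Real.sqrt M)
    (k l : Fin n → Fin M) (hk : Function.Injective k) :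
    LinearIndependent ℂ (fun i : Fin n => gabor M (k i) (l i)) := by
  have : NeZero M := ⟨hM.ne_zero⟩
  refine linearIndependent_of_sum_norm_lt_diag _
    (fun i => dotProductEquiv ℂ (Fin M) (star (gabor M (k i) (l i)))) fun i => ?_
  simp only [dotProductEquiv_star_apply_eq_gip]
  have hsqrt : 0 < √(M : ℝ) := Real.sqrt_pos.mpr (by exact_mod_cast hM.pos)
  calc ∑ j ∈ univ.erase i, ‖gip M (gabor M (k j) (l j)) (gabor M (k i) (l i))‖
      = ∑ _j ∈ univ.erase i, √(M : ℝ) :=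
        sum_congr rfl fun j hj =>
          norm_gip_gabor_of_ne hM (by omega) (by omega) (hk.ne (ne_of_mem_erase hj)) _ _
    _ = ((n : ℝ) - 1) * √(M : ℝ) := by
        rw [sum_const, card_erase_of_mem (mem_univ i), card_univ, Fintype.card_fin,
          nsmul_eq_mul, Nat.cast_pred (Fin.pos i)]
    _ < √(M : ℝ) * √(M : ℝ) := by gcongr
    _ = ‖gip M (gabor M (k i) (l i)) (gabor M (k i) (l i))‖ := by
        rw [gip_gabor_self, Complex.norm_natCast, Real.mul_self_sqrt (Nat.cast_nonneg M)]

/-- For a prime `M ≥ 5` and `ñ ≥ 1` with `ñ − 1 < √M`, any `ñ` Gabor vectors with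
pairwise distinct shift indices are linearly independent in `ℂ^M`. -/
theorem gabor_linearIndependent_of_lt_sqrt (M n : ℕ) (hM : Nat.Prime M) (hM5 : 5 ≤ M)
    (hn : 1 ≤ n) (hsmall : (n : ℝ) - 1 < Real.sqrt M)
    (k l : Fin n → Fin M) (hk : Function.Injective k) :
    LinearIndependent ℂ (fun i : Fin n => gabor M (k i) (l i)) :=
  gabor_linearIndependent_of_lt_sqrt_general M n hM hM5 hsmall k l hk
end
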